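/- The family of maps e₁^τ(a,b,c,d) = (τa(a+d)/(τa+d), b(τa+d)/(a+d), τ⁻¹c(τa+d)/(a+d), d(a+d)/(τa+d)) defines a group action of the multiplicative group: e₁^σ(e₁^τ(a,b,c,d)) = e₁^{στ}(a,b,c,d) and e₁^1 = id, wherever all denominators are nonzero. -/
import Mathlib


def e1 {F : Type*} [Field F] (τ : F) (p : F × F × F × F) : F × F × F × F :=
  let (a, b, c, d) := p
  (τ * a * (a + d) / (τ * a + d), b * (τ * a + d) / (a + d),
   τ⁻¹ * c * (τ * a + d) / (a + d), d * (a + d) / (τ * a + d))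

/-- e₁ defines an action of the multiplicative group. -/
theorem e1_action {F : Type*} [Field F] (τ σ : F) (a b c d : F)
    (hτ : τ ≠ 0) (hσ : σ ≠ 0)
    (had : a + d ≠ 0) (hτad : τ * a + d ≠ 0) (hστad : σ * τ * a + d ≠ 0) :
    e1 σ (e1 τ (a, b, c, d)) = e1 (σ * τ) (a, b, c, d) ∧
    e1 (1 : F) (a, b, c, d) = (a, b, c, d) := by
  constructor
  · have hsum : τ * a * (a + d) / (τ * a + d) + d * (a + d) / (τ * a + d) = a + d := by
      field_simp
    have hsum2 : σ * (τ * a * (a + d) / (τ * a + d)) + d * (a + d) / (τ * a + d)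
        = (a + d) * (σ * τ * a + d) / (τ * a + d) := by
      field_simp
    have hsum2ne : (a + d) * (σ * τ * a + d) / (τ * a + d) ≠ 0 :=
      div_ne_zero (mul_ne_zero had hστad) hτad
    simp only [e1]
    refine Prod.ext ?_ (Prod.ext ?_ (Prod.ext ?_ ?_)) <;> simp only []
    · rw [hsum2, div_eq_div_iff hsum2ne hστad]; field_simp
    · rw [hsum, hsum2, div_eq_div_iff had had]; field_simp
    · rw [hsum, hsum2, div_eq_div_iff had had]; field_simp
    · rw [hsum, hsum2, div_eq_div_iff hsum2ne hστad]; field_simp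
  · simp only [e1, one_mul, inv_one]
    refine Prod.ext ?_ (Prod.ext ?_ (Prod.ext ?_ ?_)) <;>
      simp [mul_div_assoc, div_self had]
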